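/- Let X be a full subcategory of the category of finitely generated right Λ-modules over an artin algebra Λ, closed under extensions and under cokernels of injections. Then a module X in X is splitting injective in X (i.e., every monomorphism X → Y with Y in add X splits) if and only if X is Ext-injective in add X (i.e., Ext^1_Λ(W, X) = 0 for all W in X). -/

import Mathlib

open CategoryTheory

universe u

/-- The `n`-th Ext group of `A`-modules `M`, `N`. -/
noncomputable abbrev ext {A : Type u} [Ring A] (M N : ModuleCat.{u} A) (n : ℕ) : Type u :=
  ((Ext ℤ (ModuleCat.{u} A) n).obj (Opposite.op M)).obj N

/-- `Ext^i(N, M) = 0` for all `i > 0`. -/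
def ExtVanish {A : Type u} [Ring A] (N M : ModuleCat.{u} A) : Prop :=
  ∀ i, 0 < i → Subsingleton (ext N M i)

/-- `M` has projective dimension at most `n`, i.e. `Ext^i(M, -) = 0` for `i > n`. -/
def pdLE {A : Type u} [Ring A] (M : ModuleCat.{u} A) (n : ℕ) : Prop :=
  ∀ i, n < i → ∀ N : ModuleCat.{u} A, Subsingleton (ext M N i)

/-- The projective dimension of `M`, as an element of `ℕ∞` (`⊤` if infinite). -/
noncomputable def projDim {A : Type u} [Ring A] (M : ModuleCat.{u} A) : ℕ∞ :=
  sInf {d : ℕ∞ | ∃ n : ℕ, d = n ∧ pdLE M n}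

/-- Membership in `𝒫`: finitely generated of finite projective dimension. -/
def InP {A : Type u} [Ring A] (M : ModuleCat.{u} A) : Prop :=
  Module.Finite A M ∧ ∃ n, pdLE M n

/-- The finitistic dimension of `A`. -/
noncomputable def findim (A : Type u) [Ring A] : ℕ∞ :=
  sSup {d : ℕ∞ | ∃ M : ModuleCat.{u} A, InP M ∧ d = projDim M}

/-- `M` is a direct summand of `S`. -/
def IsSummand {A : Type u} [Ring A] (M S : ModuleCat.{u} A) : Prop :=
  ∃ (s : M →ₗ[A] S) (r : S →ₗ[A] M), r ∘ₗ s = LinearMap.id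

/-- `M` belongs to `add 𝒳`: `M` is a direct summand of a finite direct sum of objects of `𝒳`. -/
def InAddOf {A : Type u} [Ring A] (X : ModuleCat.{u} A → Prop) (M : ModuleCat.{u} A) : Prop :=
  ∃ (k : ℕ) (F : Fin k → ModuleCat.{u} A), (∀ i, X (F i)) ∧
    IsSummand M (ModuleCat.of A (DirectSum (Fin k) (fun i => ↥(F i))))

/-- `M` belongs to `Add T`: `M` is a direct summand of an arbitrary direct sum of copies of `T`. -/
def InAdd {A : Type u} [Ring A] (T M : ModuleCat.{u} A) : Prop :=
  ∃ ι : Type u, IsSummand M (ModuleCat.of A (DirectSum ι (fun _ => ↥T)))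

/-- `M ∈ 𝒳^⊥`: `Ext^i(N, M) = 0` for all `N ∈ 𝒳` and `i > 0`. -/
def InPerpOf {A : Type u} [Ring A] (X : ModuleCat.{u} A → Prop) (M : ModuleCat.{u} A) : Prop :=
  ∀ N, X N → ExtVanish N M

/-- `M` is Ext-injective in `𝒫`: `M ∈ 𝒫` and `Ext^1(N, M) = 0` for all `N ∈ 𝒫`. -/
def ExtInjInP {A : Type u} [Ring A] (M : ModuleCat.{u} A) : Prop :=
  InP M ∧ ∀ N : ModuleCat.{u} A, InP N → Subsingleton (ext N M 1)

/-- `M` is splitting injective in `𝒳`: every injective map `M → Y` with `Y ∈ add 𝒳` splits. -/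
def SplittingInjIn {A : Type u} [Ring A] (X : ModuleCat.{u} A → Prop)
    (M : ModuleCat.{u} A) : Prop :=
  ∀ Y : ModuleCat.{u} A, InAddOf X Y → ∀ f : M →ₗ[A] Y, Function.Injective f →
    ∃ r : Y →ₗ[A] M, r ∘ₗ f = LinearMap.id

/-- `0 → M₁ → M₂ → M₃ → 0` is a short exact sequence. -/
def ShortExact {A : Type u} [Ring A] {M₁ M₂ M₃ : ModuleCat.{u} A}
    (f : M₁ →ₗ[A] M₂) (g : M₂ →ₗ[A] M₃) : Prop :=
  Function.Injective f ∧ Function.Exact f g ∧ Function.Surjective g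

/-- `f : XM → M` is a right `𝒳`-approximation of `M`. -/
def IsRightApprox {A : Type u} [Ring A] (X : ModuleCat.{u} A → Prop)
    {XM M : ModuleCat.{u} A} (f : XM →ₗ[A] M) : Prop :=
  X XM ∧ ∀ Y : ModuleCat.{u} A, X Y → ∀ g : Y →ₗ[A] M, ∃ h : Y →ₗ[A] XM, f ∘ₗ h = g

/-- `f : XM → M` is a minimal right `𝒳`-approximation. -/
def IsMinimalRightApprox {A : Type u} [Ring A] (X : ModuleCat.{u} A → Prop)
    {XM M : ModuleCat.{u} A} (f : XM →ₗ[A] M) : Prop :=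
  IsRightApprox X f ∧ ∀ g : XM →ₗ[A] XM, f ∘ₗ g = f → Function.Bijective g

/-- `𝒳` is contravariantly finite in `mod A`. -/
def ContravariantlyFinite {A : Type u} [Ring A] (X : ModuleCat.{u} A → Prop) : Prop :=
  ∀ M : ModuleCat.{u} A, Module.Finite A M →
    ∃ (XM : ModuleCat.{u} A) (f : XM →ₗ[A] M), IsRightApprox X f

/-- `M` is an indecomposable module: nonzero, and its only idempotent endomorphisms
are `0` and the identity. -/
def Indec {A : Type u} [Ring A] (M : ModuleCat.{u} A) : Prop :=
  (¬ Subsingleton M) ∧ ∀ e : M →ₗ[A] M, e ∘ₗ e = e → e = 0 ∨ e = LinearMap.id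

/-- `L` admits a finite coresolution `0 → L → C^0 → ⋯ → C^n → 0` with all `C^i ∈ add T`. -/
def HasAddCoresolution {A : Type u} [Ring A] (T L : ModuleCat.{u} A) : Prop :=
  ∃ (C : ℕ → ModuleCat.{u} A) (d : ∀ i, C i →ₗ[A] C (i+1)) (f : L →ₗ[A] C 0),
    Function.Injective f ∧ Function.Exact f (d 0) ∧
    (∀ i, Function.Exact (d i) (d (i+1))) ∧
    (∀ i, InAddOf (fun X => X = T) (C i)) ∧
    (∃ m, ∀ i, m ≤ i → Subsingleton (C i))

/-- `T` is a tilting `A`-module. -/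
def IsTilting {A : Type u} [Ring A] (T : ModuleCat.{u} A) : Prop :=
  Module.Finite A T ∧ (∃ n, pdLE T n) ∧ ExtVanish T T ∧
    HasAddCoresolution T (ModuleCat.of A A)

/-- `𝒳` is a resolving subcategory of `mod A`. -/
def Resolving {A : Type u} [Ring A] (X : ModuleCat.{u} A → Prop) : Prop :=
  (∀ M : ModuleCat.{u} A, Module.Finite A M → Module.Projective A M → X M) ∧
  (∀ (M₁ M₂ M₃ : ModuleCat.{u} A) (f : M₁ →ₗ[A] M₂) (g : M₂ →ₗ[A] M₃),
      ShortExact f g → X M₁ → X M₃ → X M₂) ∧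
  (∀ (M₁ M₂ M₃ : ModuleCat.{u} A) (f : M₁ →ₗ[A] M₂) (g : M₂ →ₗ[A] M₃),
      ShortExact f g → X M₂ → X M₃ → X M₁)

/-- `F` is a complete irredundant family of representatives of the isomorphism classes of
indecomposable Ext-injective modules in `𝒫`. -/
def IsCompleteExtInjFamily {A : Type u} [Ring A] {ι : Type u}
    (F : ι → ModuleCat.{u} A) : Prop :=
  (∀ i, Indec (F i) ∧ ExtInjInP (F i)) ∧
  (∀ M : ModuleCat.{u} A, Indec M → ExtInjInP M → ∃ i, Nonempty (M ≃ₗ[A] F i)) ∧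
  (∀ i j, Nonempty (F i ≃ₗ[A] F j) → i = j)

/-- `I` is a complete set of pairwise non-isomorphic indecomposable injective modules. -/
def IsCompleteIndecInjFamily {A : Type u} [Ring A] {n : ℕ}
    (I : Fin n → ModuleCat.{u} A) : Prop :=
  (∀ j, Module.Finite A (I j) ∧ Module.Injective A (I j) ∧ Indec (I j)) ∧
  (∀ M : ModuleCat.{u} A, Module.Finite A M → Module.Injective A M → Indec M →
      ∃ j, Nonempty (M ≃ₗ[A] I j)) ∧
  (∀ j k, Nonempty (I j ≃ₗ[A] I k) → j = k)

/-! `Ext¹(W, M)` vanishes iff every short exact sequence `0 → M → E → W → 0` splits: a cocycle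
`P₁ → M` on a projective resolution of `W` is extended to `P₀` through a retraction of its
pushout extension, and conversely a lift `P₀ → E` of `P₀ → W` restricts to a cocycle, whose
extension corrects the lift to a section of `E → W`. If `W ∈ 𝒳` then `E ∈ 𝒳` by closure under
extensions, so a splitting injective `M` is Ext-injective. Conversely, a monomorphism `M → Y` with
`Y` a summand of a finite sum `S ∈ 𝒳` gives `M → S` with cokernel in `𝒳`, which splits. -/
section Extensions

variable {A : Type u} [Ring A]

theorem ext_one_subsingleton_iff_forall_extend (W M : ModuleCat.{u} A)
    (P : ProjectiveResolution W) :
    Subsingleton (ext W M 1) ↔ ∀ φ : P.complex.X 1 ⟶ M, P.complex.d 2 1 ≫ φ = 0 →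
      ∃ ψ : P.complex.X 0 ⟶ M, P.complex.d 1 0 ≫ ψ = φ := by
  let K := P.complex.linearYonedaObj ℤ M
  have hK : Subsingleton (ext W M 1) ↔ Subsingleton (K.homology 1) :=
    Equiv.subsingleton_congr ((forget (ModuleCat ℤ)).mapIso (P.isoExt 1 M)).toEquiv
  rw [hK, ← ModuleCat.isZero_iff_subsingleton, ← HomologicalComplex.exactAt_iff_isZero_homology,
    HomologicalComplex.exactAt_iff' K 0 1 2 (by simp) (by simp),
    ShortComplex.moduleCat_exact_iff]
  rfl

theorem exists_retraction_of_ext_one_subsingleton {S : ShortComplex (ModuleCat.{u} A)}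
    (hS : S.ShortExact) (hExt : Subsingleton (ext S.X₃ S.X₁ 1)) :
    ∃ r : S.X₂ ⟶ S.X₁, S.f ≫ r = 𝟙 S.X₁ := by
  obtain ⟨P⟩ : Nonempty (ProjectiveResolution S.X₃) := HasProjectiveResolution.out
  have : Mono S.f := hS.mono_f
  have : Epi S.g := hS.epi_g
  let π₀ : P.complex.X 0 ⟶ S.X₃ := P.π.f 0
  have : Epi π₀ := inferInstanceAs (Epi (P.π.f 0))
  let l : P.complex.X 0 ⟶ S.X₂ := Projective.factorThru π₀ S.g
  have hl : l ≫ S.g = π₀ := Projective.factorThru_comp _ _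
  let φ : P.complex.X 1 ⟶ S.X₁ := hS.exact.lift (P.complex.d 1 0 ≫ l)
    (by rw [Category.assoc, hl]; exact P.complex_d_comp_π_f_zero)
  have hφ : φ ≫ S.f = P.complex.d 1 0 ≫ l := hS.exact.lift_f _ _
  have hcocycle : P.complex.d 2 1 ≫ φ = 0 := by
    rw [← cancel_mono S.f, Category.assoc, hφ]; simp
  obtain ⟨ψ, hψ⟩ := (ext_one_subsingleton_iff_forall_extend _ _ P).1 hExt φ hcocycle
  let σ : S.X₃ ⟶ S.X₂ := P.exact₀.desc (l - ψ ≫ S.f) (by simp [reassoc_of% hψ, hφ])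
  have hσ : π₀ ≫ σ = l - ψ ≫ S.f := P.exact₀.g_desc _ _
  have hσg : σ ≫ S.g = 𝟙 S.X₃ := by
    rw [← cancel_epi π₀, reassoc_of% hσ]; simp [hl]
  exact ⟨_, (ShortComplex.Splitting.ofExactOfSection S hS.exact σ hσg hS.mono_f).f_r⟩

theorem exists_shortExact_pushout {K B C M : ModuleCat.{u} A} {f : K →ₗ[A] B} {p : B →ₗ[A] C}
    (hfp : Function.Exact f p) (hp : Function.Surjective p) (φ : K →ₗ[A] M)
    (hφ : LinearMap.ker f ≤ LinearMap.ker φ) :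
    ∃ (E : ModuleCat.{u} A) (i : M →ₗ[A] E) (q : E →ₗ[A] C) (j : B →ₗ[A] E),
      ShortExact i q ∧ j ∘ₗ f = i ∘ₗ φ := by
  let N := LinearMap.range (φ.prod (-f))
  have hN : N ≤ LinearMap.ker (p ∘ₗ LinearMap.snd A M B) := by
    rintro _ ⟨x, rfl⟩
    simp [hfp.apply_apply_eq_zero]
  have mk_sub_mem {y z : M × B} (h : y - z ∈ N) : N.mkQ y = N.mkQ z :=
    (Submodule.Quotient.eq N).2 h
  refine ⟨ModuleCat.of A ((M × B) ⧸ N), N.mkQ ∘ₗ LinearMap.inl A M B,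
    N.liftQ _ hN, N.mkQ ∘ₗ LinearMap.inr A M B, ⟨?_, ?_, ?_⟩, ?_⟩
  · refine (injective_iff_map_eq_zero _).2 fun m hm ↦ ?_
    obtain ⟨x, hx⟩ := (Submodule.Quotient.mk_eq_zero N).1 hm
    have hfx : f x = 0 := neg_eq_zero.1 (congrArg Prod.snd hx)
    have hφx : φ x = m := congrArg Prod.fst hx
    rw [← hφx]
    exact hφ hfx
  · intro e
    induction e using Submodule.Quotient.induction_on with
    | H y =>
      obtain ⟨m, b⟩ := y
      change p b = 0 ↔ _
      constructor
      · intro hb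
        obtain ⟨x, rfl⟩ := (hfp b).1 hb
        exact ⟨m + φ x, mk_sub_mem ⟨x, by simp⟩⟩
      · rintro ⟨m', hm'⟩
        have h := congrArg (N.liftQ _ hN) hm'
        change p 0 = p b at h
        rw [← h, map_zero]
  · intro c
    obtain ⟨b, rfl⟩ := hp c
    exact ⟨N.mkQ (0, b), rfl⟩
  · ext x
    exact mk_sub_mem ⟨-x, by simp⟩

theorem ext_one_subsingleton_of_forall_retraction (W M : ModuleCat.{u} A)
    (h : ∀ (E : ModuleCat.{u} A) (i : M →ₗ[A] E) (p : E →ₗ[A] W), ShortExact i p →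
      ∃ r : E →ₗ[A] M, r ∘ₗ i = LinearMap.id) :
    Subsingleton (ext W M 1) := by
  obtain ⟨P⟩ : Nonempty (ProjectiveResolution W) := HasProjectiveResolution.out
  rw [ext_one_subsingleton_iff_forall_extend W M P]
  intro φ hφ
  let π₀ : P.complex.X 0 ⟶ W := P.π.f 0
  have hexact : Function.Exact (P.complex.d 1 0) π₀ :=
    (ShortComplex.ShortExact.moduleCat_exact_iff_function_exact _).1 P.exact₀
  have hπ₀ : Function.Surjective π₀ :=
    (ModuleCat.epi_iff_surjective _).1 (inferInstanceAs (Epi (P.π.f 0)))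
  have hker : LinearMap.ker (P.complex.d 1 0).hom ≤ LinearMap.ker φ.hom := by
    rw [← (P.exact_succ 0).moduleCat_range_eq_ker]
    rintro _ ⟨y, rfl⟩
    exact ConcreteCategory.congr_hom hφ y
  obtain ⟨E, i, q, j, hiq, hji⟩ := exists_shortExact_pushout hexact hπ₀ φ.hom hker
  obtain ⟨r, hri⟩ := h E i q hiq
  refine ⟨ModuleCat.ofHom (r ∘ₗ j), ModuleCat.hom_ext ?_⟩
  change r ∘ₗ (j ∘ₗ (P.complex.d 1 0).hom) = φ.hom
  rw [hji, ← LinearMap.comp_assoc, hri, LinearMap.id_comp]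

theorem ext_one_subsingleton_iff_forall_retraction (W M : ModuleCat.{u} A) :
    Subsingleton (ext W M 1) ↔
      ∀ (E : ModuleCat.{u} A) (i : M →ₗ[A] E) (p : E →ₗ[A] W), ShortExact i p →
        ∃ r : E →ₗ[A] M, r ∘ₗ i = LinearMap.id := by
  refine ⟨fun hExt E i p ⟨hi, hip, hp⟩ ↦ ?_, ext_one_subsingleton_of_forall_retraction W M⟩
  let S := ShortComplex.moduleCatMk i p hip.linearMap_comp_eq_zero
  obtain ⟨r, hr⟩ := exists_retraction_of_ext_one_subsingleton
    (ModuleCat.shortComplex_shortExact S hip hi hp) hExt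
  exact ⟨r.hom, congrArg ModuleCat.Hom.hom hr⟩

end Extensions

section Closure

variable {A : Type u} [Ring A]

def IsClosedUnderExtensions (X : ModuleCat.{u} A → Prop) : Prop :=
  ∀ (M₁ M₂ M₃ : ModuleCat.{u} A) (f : M₁ →ₗ[A] M₂) (g : M₂ →ₗ[A] M₃),
    ShortExact f g → X M₁ → X M₃ → X M₂

def IsClosedUnderCokernelsOfInjections (X : ModuleCat.{u} A → Prop) : Prop :=
  ∀ (M₁ M₂ M₃ : ModuleCat.{u} A) (f : M₁ →ₗ[A] M₂) (g : M₂ →ₗ[A] M₃),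
    ShortExact f g → X M₁ → X M₂ → X M₃

variable {X : ModuleCat.{u} A → Prop}

theorem IsClosedUnderCokernelsOfInjections.of_subsingleton
    (hX : IsClosedUnderCokernelsOfInjections X) {M : ModuleCat.{u} A} (hM : X M)
    (Z : ModuleCat.{u} A) [Subsingleton Z] : X Z :=
  hX M M Z LinearMap.id 0 ⟨Function.injective_id,
    (LinearMap.exact_zero_iff_surjective _ _).2 Function.surjective_id,
    fun _ ↦ ⟨0, Subsingleton.elim _ _⟩⟩ hM hM

theorem IsClosedUnderCokernelsOfInjections.of_linearEquiv
    (hX : IsClosedUnderCokernelsOfInjections X) {N₁ N₂ : ModuleCat.{u} A}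
    (e : N₁ ≃ₗ[A] N₂) (h₁ : X N₁) : X N₂ :=
  hX (ModuleCat.of A PUnit) N₁ N₂ 0 e ⟨Function.injective_of_subsingleton _,
    (LinearMap.exact_zero_iff_injective _ _).2 e.injective, e.surjective⟩
    (hX.of_subsingleton h₁ _) h₁

theorem IsClosedUnderExtensions.prod (hX : IsClosedUnderExtensions X)
    {N₁ N₂ : ModuleCat.{u} A} (h₁ : X N₁) (h₂ : X N₂) : X (ModuleCat.of A (N₁ × N₂)) :=
  hX N₁ _ N₂ _ _ ⟨LinearMap.inl_injective, Function.Exact.inl_snd,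
    LinearMap.snd_surjective⟩ h₁ h₂

theorem mem_pi_fin (hext : IsClosedUnderExtensions X)
    (hcoker : IsClosedUnderCokernelsOfInjections X) {M : ModuleCat.{u} A} (hM : X M) :
    ∀ {k : ℕ} (F : Fin k → ModuleCat.{u} A), (∀ i, X (F i)) →
      X (ModuleCat.of A (∀ i, F i))
  | 0, _, _ => hcoker.of_subsingleton hM _
  | _ + 1, F, hF => hcoker.of_linearEquiv (Fin.consLinearEquiv A fun i ↦ F i)
      (hext.prod (hF 0) (mem_pi_fin hext hcoker hM (fun i ↦ F i.succ) fun i ↦ hF i.succ))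

theorem mem_directSum_fin (hext : IsClosedUnderExtensions X)
    (hcoker : IsClosedUnderCokernelsOfInjections X) {M : ModuleCat.{u} A} (hM : X M)
    {k : ℕ} (F : Fin k → ModuleCat.{u} A) (hF : ∀ i, X (F i)) :
    X (ModuleCat.of A (DirectSum (Fin k) fun i ↦ F i)) :=
  hcoker.of_linearEquiv (DirectSum.linearEquivFunOnFintype A (Fin k) fun i ↦ F i).symm
    (mem_pi_fin hext hcoker hM F hF)

theorem inAddOf_of_mem {E : ModuleCat.{u} A} (hE : X E) : InAddOf X E :=
  ⟨1, fun _ ↦ E, fun _ ↦ hE, DirectSum.lof A (Fin 1) (fun _ ↦ E) 0,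
    DirectSum.component A (Fin 1) (fun _ ↦ E) 0,
    LinearMap.ext fun b ↦ DirectSum.component.lof_self (M := fun _ ↦ E) A 0 b⟩

end Closure

theorem stmt_0_general (Λ : Type u) [Ring Λ]
    (X : ModuleCat.{u} Λᵐᵒᵖ → Prop)
    (hext : ∀ (M₁ M₂ M₃ : ModuleCat.{u} Λᵐᵒᵖ) (f : M₁ →ₗ[Λᵐᵒᵖ] M₂) (g : M₂ →ₗ[Λᵐᵒᵖ] M₃),
      ShortExact f g → X M₁ → X M₃ → X M₂)
    (hcoker : ∀ (M₁ M₂ M₃ : ModuleCat.{u} Λᵐᵒᵖ) (f : M₁ →ₗ[Λᵐᵒᵖ] M₂) (g : M₂ →ₗ[Λᵐᵒᵖ] M₃),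
      ShortExact f g → X M₁ → X M₂ → X M₃)
    (M : ModuleCat.{u} Λᵐᵒᵖ) (hM : X M) :
    SplittingInjIn X M ↔ ∀ W : ModuleCat.{u} Λᵐᵒᵖ, X W → Subsingleton (ext W M 1) := by
  simp_rw [ext_one_subsingleton_iff_forall_retraction]
  constructor
  · intro hsplit W hW E i p hip
    exact hsplit E (inAddOf_of_mem (hext M E W i p hip hM hW)) i hip.1
  · rintro hvan Y ⟨k, F, hF, s, r, hrs⟩ f hf
    let g := s ∘ₗ f
    have hg : Function.Injective g := (Function.LeftInverse.injective
      (g := r) fun y ↦ LinearMap.congr_fun hrs y).comp hf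
    have hgq : ShortExact (M₃ := ModuleCat.of _ (_ ⧸ LinearMap.range g)) g
        (LinearMap.range g).mkQ :=
      ⟨hg, LinearMap.exact_map_mkQ_range g, Submodule.mkQ_surjective _⟩
    have hC := hcoker _ _ _ g _ hgq hM (mem_directSum_fin hext hcoker hM F hF)
    obtain ⟨ρ, hρ⟩ := hvan _ hC _ g _ hgq
    exact ⟨ρ ∘ₗ s, hρ⟩

/-- In a subcategory `𝒳` of `mod Λ` closed under extensions and cokernels of
injections, a module of `𝒳` is splitting injective in `𝒳` iff it is Ext-injective in `add 𝒳`. -/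
theorem stmt_0 (Λ : Type u) [Ring Λ] (R : Type u) [CommRing R] [IsArtinianRing R]
    [Algebra R Λ] [Module.Finite R Λ]
    (X : ModuleCat.{u} Λᵐᵒᵖ → Prop)
    (hfg : ∀ M : ModuleCat.{u} Λᵐᵒᵖ, X M → Module.Finite Λᵐᵒᵖ M)
    (hext : ∀ (M₁ M₂ M₃ : ModuleCat.{u} Λᵐᵒᵖ) (f : M₁ →ₗ[Λᵐᵒᵖ] M₂) (g : M₂ →ₗ[Λᵐᵒᵖ] M₃),
      ShortExact f g → X M₁ → X M₃ → X M₂)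
    (hcoker : ∀ (M₁ M₂ M₃ : ModuleCat.{u} Λᵐᵒᵖ) (f : M₁ →ₗ[Λᵐᵒᵖ] M₂) (g : M₂ →ₗ[Λᵐᵒᵖ] M₃),
      ShortExact f g → X M₁ → X M₂ → X M₃)
    (M : ModuleCat.{u} Λᵐᵒᵖ) (hM : X M) :
    SplittingInjIn X M ↔ ∀ W : ModuleCat.{u} Λᵐᵒᵖ, X W → Subsingleton (ext W M 1) :=
  stmt_0_general Λ X hext hcoker M hM
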